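/- arXiv:1905.08656 — 2 statements merged into one kernel-verified Lean document; each statement's English description precedes it below -/
import Mathlib

section
/- Let 1 < p < ∞ and X = (Σ ⊕ X_n)_{ℓ_p} be the ℓ_p-direct sum of Banach spaces X_n, and let 1 ≤ q < p*. Then a bounded subset K of X* is a q-Right set if and only if P_n(K) is a q-Right set in X_n* for each n. -/
open Filter Topology NormedSpace Bornology
open scoped ENNReal ContinuousMap ZeroAtInfty

/-- A sequence is weakly null. -/
def WeaklyNull {X : Type*} [NormedAddCommGroup X] [NormedSpace ℝ X] (x : ℕ → X) : Prop :=
  ∀ f : StrongDual ℝ X, Tendsto (fun n => f (x n)) atTop (𝓝 0)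

/-- A sequence is weakly `p`-summable; for `p = ∞` this means weakly null. -/
def WeaklyPSummable {X : Type*} [NormedAddCommGroup X] [NormedSpace ℝ X] (p : ℝ≥0∞)
    (x : ℕ → X) : Prop :=
  if p = ∞ then WeaklyNull x else ∀ f : StrongDual ℝ X, Memℓp (fun n => f (x n)) p

/-- A Dunford-Pettis subset of a Banach space: a bounded set on which every weakly null
sequence of functionals converges uniformly to zero. -/
def IsDunfordPettisSet {X : Type*} [NormedAddCommGroup X] [NormedSpace ℝ X] (A : Set X) : Prop :=
  IsBounded A ∧ ∀ f : ℕ → StrongDual ℝ X, WeaklyNull f →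
    Tendsto (fun n => ⨆ a : A, |f n a.1|) atTop (𝓝 0)

/-- A `p`-Right null sequence: weakly `p`-summable and a Dunford-Pettis set. -/
def PRightNull {X : Type*} [NormedAddCommGroup X] [NormedSpace ℝ X] (p : ℝ≥0∞)
    (x : ℕ → X) : Prop :=
  WeaklyPSummable p x ∧ IsDunfordPettisSet (Set.range x)

/-- A `p`-Right subset of the dual: every `p`-Right null sequence in `X` converges to `0`
uniformly on `K`. -/
def IsPRightSet {X : Type*} [NormedAddCommGroup X] [NormedSpace ℝ X] (p : ℝ≥0∞)
    (K : Set (StrongDual ℝ X)) : Prop :=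
  IsBounded K ∧ ∀ x : ℕ → X, PRightNull p x →
    Tendsto (fun n => ⨆ f : K, |f.1 (x n)|) atTop (𝓝 0)

/-- A `p`-Right* subset of `X`: every `p`-Right null sequence in `X*` converges to `0`
uniformly on `K`. -/
def IsPRightStarSet {X : Type*} [NormedAddCommGroup X] [NormedSpace ℝ X] (p : ℝ≥0∞)
    (K : Set X) : Prop :=
  IsBounded K ∧ ∀ f : ℕ → StrongDual ℝ X, PRightNull p f →
    Tendsto (fun n => ⨆ a : K, |f n a.1|) atTop (𝓝 0)

/-- A `p`-(V) subset of the dual. -/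
def IsPVSet {X : Type*} [NormedAddCommGroup X] [NormedSpace ℝ X] (p : ℝ≥0∞)
    (K : Set (StrongDual ℝ X)) : Prop :=
  IsBounded K ∧ ∀ x : ℕ → X, WeaklyPSummable p x →
    Tendsto (fun n => ⨆ f : K, |f.1 (x n)|) atTop (𝓝 0)

/-- A `p`-(V*) subset of `X`. -/
def IsPVStarSet {X : Type*} [NormedAddCommGroup X] [NormedSpace ℝ X] (p : ℝ≥0∞)
    (K : Set X) : Prop :=
  IsBounded K ∧ ∀ f : ℕ → StrongDual ℝ X, WeaklyPSummable p f →
    Tendsto (fun n => ⨆ a : K, |f n a.1|) atTop (𝓝 0)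

/-- A Dunford-Pettis `p`-convergent operator maps `p`-Right null sequences to norm
null sequences. -/
def DPpConvergent {X Y : Type*} [NormedAddCommGroup X] [NormedSpace ℝ X] [NormedAddCommGroup Y]
    [NormedSpace ℝ Y] (p : ℝ≥0∞) (T : X →L[ℝ] Y) : Prop :=
  ∀ x : ℕ → X, PRightNull p x → Tendsto (fun n => ‖T (x n)‖) atTop (𝓝 0)

/-- The adjoint of a bounded operator between normed spaces. -/
noncomputable def adjointOp {X Y : Type*} [NormedAddCommGroup X] [NormedSpace ℝ X]
    [NormedAddCommGroup Y] [NormedSpace ℝ Y] (T : X →L[ℝ] Y) : StrongDual ℝ Y →L[ℝ] StrongDual ℝ X :=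
  (ContinuousLinearMap.compL ℝ X Y ℝ).flip T

/-- Weak convergence of a sequence. -/
def WeaklyConvTo {X : Type*} [NormedAddCommGroup X] [NormedSpace ℝ X] (x : ℕ → X) (a : X) : Prop :=
  ∀ f : StrongDual ℝ X, Tendsto (fun n => f (x n)) atTop (𝓝 (f a))

/-- A relatively weakly compact set (sequentially): every sequence in `A` has a weakly
convergent subsequence with limit in the space. -/
def RelWeaklyCompact {X : Type*} [NormedAddCommGroup X] [NormedSpace ℝ X] (A : Set X) : Prop :=
  ∀ x : ℕ → X, (∀ n, x n ∈ A) →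
    ∃ a : X, ∃ φ : ℕ → ℕ, StrictMono φ ∧ WeaklyConvTo (fun n => x (φ n)) a

/-- A relatively weakly `q`-compact set: every sequence in `A` has a weakly `q`-convergent
subsequence with limit in the space. -/
def RelWeaklyQCompact {X : Type*} [NormedAddCommGroup X] [NormedSpace ℝ X] (q : ℝ≥0∞)
    (A : Set X) : Prop :=
  ∀ x : ℕ → X, (∀ n, x n ∈ A) →
    ∃ a : X, ∃ φ : ℕ → ℕ, StrictMono φ ∧ WeaklyPSummable q (fun n => x (φ n) - a)

/-- The `p`-sequentially Right property: every `p`-Right subset of the dual is relatively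
weakly compact. -/
def PSR (p : ℝ≥0∞) (X : Type*) [NormedAddCommGroup X] [NormedSpace ℝ X] : Prop :=
  ∀ K : Set (StrongDual ℝ X), IsPRightSet p K → RelWeaklyCompact K

/-- The `p`-sequentially Right* property: every `p`-Right* subset is relatively weakly
compact. -/
def PSRStar (p : ℝ≥0∞) (X : Type*) [NormedAddCommGroup X] [NormedSpace ℝ X] : Prop :=
  ∀ K : Set X, IsPRightStarSet p K → RelWeaklyCompact K

/-- The canonical inclusion of the `n`-th coordinate into `lp E p`, as a continuous
linear map. -/
noncomputable def lpSingleCLM (E : ℕ → Type*) [∀ i, NormedAddCommGroup (E i)]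
    [∀ i, NormedSpace ℝ (E i)] (p : ℝ≥0∞) [Fact (1 ≤ p)] (hp : p ≠ ∞) (n : ℕ) :
    E n →L[ℝ] lp E p := by
  have h0 : 0 < p.toReal :=
    ENNReal.toReal_pos (lt_of_lt_of_le zero_lt_one (Fact.out : 1 ≤ p)).ne' hp
  refine LinearMap.mkContinuous
    { toFun := fun a => lp.single p n a
      map_add' := ?_
      map_smul' := fun c a => lp.single_smul p n c a } 1 ?_
  · intro a b
    apply lp.ext
    funext j
    by_cases hj : j = n
    · subst hj
      simp [lp.single_apply_self]
    · simp [lp.single_apply_ne p n _ hj]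
  · intro a
    have := lp.norm_single (E := E) (p := p) (lt_of_lt_of_le zero_lt_one (Fact.out : 1 ≤ p)) n a
    simpa [Pi.single_eq_same] using le_of_eq this


/-! ### Auxiliary lemmas -/

section Aux

variable {X Y : Type*} [NormedAddCommGroup X] [NormedSpace ℝ X]
  [NormedAddCommGroup Y] [NormedSpace ℝ Y]

lemma aux_iSup_abs_nonneg {ι : Sort*} (g : ι → ℝ) : 0 ≤ ⨆ i, |g i| :=
  Real.iSup_nonneg fun _ => abs_nonneg _

lemma aux_iSup_subtype_image (T : X → Y) (A : Set X) (g : Y → ℝ) :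
    (⨆ y : T '' A, g y.1) = ⨆ a : A, g (T a.1) := by
  rw [iSup, iSup]
  congr 1
  ext c
  simp only [Set.mem_range]
  constructor
  · rintro ⟨⟨y, a, ha, rfl⟩, rfl⟩; exact ⟨⟨a, ha⟩, rfl⟩
  · rintro ⟨⟨a, ha⟩, rfl⟩; exact ⟨⟨T a, a, ha, rfl⟩, rfl⟩

lemma aux_weaklyNull_of_pSummable {q : ℝ≥0∞} (hq : q ≠ ∞) (hq0 : 0 < q.toReal)
    {x : ℕ → X} (h : WeaklyPSummable q x) : WeaklyNull x := by
  rw [WeaklyPSummable, if_neg hq] at h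
  intro f
  have hs : Summable fun n => ‖f (x n)‖ ^ q.toReal := (memℓp_gen_iff hq0).1 (h f)
  have h0 : Tendsto (fun n => ‖f (x n)‖ ^ q.toReal) atTop (𝓝 0) := hs.tendsto_atTop_zero
  have h1 : Tendsto (fun n => (‖f (x n)‖ ^ q.toReal) ^ (q.toReal)⁻¹) atTop
      (𝓝 ((0:ℝ) ^ (q.toReal)⁻¹)) := h0.rpow_const (Or.inr (by positivity))
  rw [Real.zero_rpow (by positivity)] at h1
  have heq : ∀ n, (‖f (x n)‖ ^ q.toReal) ^ (q.toReal)⁻¹ = ‖f (x n)‖ := fun n =>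
    Real.rpow_rpow_inv (norm_nonneg _) hq0.ne'
  rw [tendsto_zero_iff_norm_tendsto_zero]
  simpa only [heq] using h1

lemma aux_bound_of_pSummable [CompleteSpace X] {q : ℝ≥0∞} (hq : q ≠ ∞) {x : ℕ → X}
    (h : WeaklyPSummable q x) : ∃ B : ℝ, 0 ≤ B ∧ ∀ n, ‖x n‖ ≤ B := by
  have hptw : ∀ f : StrongDual ℝ X, ∃ C, ∀ n, ‖(NormedSpace.inclusionInDoubleDualLi ℝ (E := X) (x n)) f‖ ≤ C := by
    intro f
    · rw [WeaklyPSummable, if_neg hq] at h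
      have := ((h f).of_exponent_ge le_top)
      obtain ⟨C, hC⟩ := memℓp_infty_iff.1 this
      refine ⟨C, fun n => ?_⟩
      have : ‖f (x n)‖ ≤ C := hC ⟨n, rfl⟩
      simpa [NormedSpace.inclusionInDoubleDualLi] using this
  obtain ⟨C', hC'⟩ := banach_steinhaus (g := fun n => (NormedSpace.inclusionInDoubleDualLi ℝ (E := X) (x n) : StrongDual ℝ (StrongDual ℝ X))) (fun f => hptw f)
  refine ⟨max C' 0, le_max_right _ _, fun n => ?_⟩
  have : ‖(NormedSpace.inclusionInDoubleDualLi ℝ (E := X) (x n) : StrongDual ℝ (StrongDual ℝ X))‖ = ‖x n‖ :=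
    (NormedSpace.inclusionInDoubleDualLi ℝ (E := X)).norm_map (x n)
  exact le_trans (by rw [← this]; exact hC' n) (le_max_left _ _)

lemma aux_weaklyPSummable_comp {q : ℝ≥0∞} (T : X →L[ℝ] Y) {x : ℕ → X}
    (h : WeaklyPSummable q x) : WeaklyPSummable q (fun n => T (x n)) := by
  by_cases hq : q = ∞
  · rw [WeaklyPSummable, if_pos hq] at h ⊢
    intro f
    exact h (f.comp T)
  · rw [WeaklyPSummable, if_neg hq] at h ⊢
    intro f
    exact h (f.comp T)

lemma aux_DP_subset {A B : Set X} (h : IsDunfordPettisSet A) (hBA : B ⊆ A) :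
    IsDunfordPettisSet B := by
  obtain ⟨hAb, hA⟩ := h
  obtain ⟨C, hC⟩ := isBounded_iff_forall_norm_le.1 hAb
  refine ⟨hAb.subset hBA, fun f hf => ?_⟩
  have hbdd : ∀ n, BddAbove (Set.range fun a : A => |f n a.1|) := by
    intro n
    refine ⟨‖f n‖ * C, ?_⟩
    rintro c ⟨a, rfl⟩
    calc |f n a.1| ≤ ‖f n‖ * ‖a.1‖ := (f n).le_opNorm a.1
    _ ≤ ‖f n‖ * C := by
        have := hC a.1 a.2
        exact mul_le_mul_of_nonneg_left this (norm_nonneg _)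
  refine squeeze_zero (fun n => aux_iSup_abs_nonneg _) (fun n => ?_) (hA f hf)
  exact Real.iSup_le (fun b => le_ciSup (hbdd n) ⟨b.1, hBA b.2⟩) (aux_iSup_abs_nonneg _)

lemma aux_DP_image (T : X →L[ℝ] Y) {A : Set X} (h : IsDunfordPettisSet A) :
    IsDunfordPettisSet (T '' A) := by
  obtain ⟨hAb, hA⟩ := h
  obtain ⟨C, hC⟩ := isBounded_iff_forall_norm_le.1 hAb
  constructor
  · refine isBounded_iff_forall_norm_le.2 ⟨‖T‖ * C, ?_⟩
    rintro y ⟨a, ha, rfl⟩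
    exact le_trans (T.le_opNorm a)
      (mul_le_mul_of_nonneg_left (hC a ha) (norm_nonneg _))
  · intro f hf
    have hwn : WeaklyNull (fun n => (f n).comp T) := by
      intro F
      exact hf (F.comp (adjointOp T))
    have := hA _ hwn
    refine Tendsto.congr (fun n => ?_) this
    exact (aux_iSup_subtype_image T A (fun y => |f n y|)).symm

lemma aux_PRightNull_comp {q : ℝ≥0∞} (T : X →L[ℝ] Y) {x : ℕ → X}
    (h : PRightNull q x) : PRightNull q (fun n => T (x n)) := by
  refine ⟨aux_weaklyPSummable_comp T h.1, ?_⟩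
  have : Set.range (fun n => T (x n)) = T '' Set.range x := by
    rw [← Set.range_comp]; rfl
  rw [this]
  exact aux_DP_image T h.2

lemma aux_PRightNull_subseq {q : ℝ≥0∞} (hq : q ≠ ∞) (hq0 : 0 < q.toReal) {x : ℕ → X}
    (h : PRightNull q x) {φ : ℕ → ℕ} (hφ : StrictMono φ) :
    PRightNull q (fun n => x (φ n)) := by
  constructor
  · rw [WeaklyPSummable, if_neg hq]
    intro f
    have hs : Summable fun n => ‖f (x n)‖ ^ q.toReal := by
      have h1 := h.1
      rw [WeaklyPSummable, if_neg hq] at h1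
      exact (memℓp_gen_iff hq0).1 (h1 f)
    exact (memℓp_gen_iff hq0).2 (hs.comp_injective hφ.injective)
  · exact aux_DP_subset h.2 (by rintro _ ⟨n, rfl⟩; exact ⟨φ n, rfl⟩)

end Aux

lemma aux_arith {ε MK A am δ0 T Gz : ℝ} (hMK0 : 0 ≤ MK) (hA0 : 0 ≤ A)
    (ham : 0 < am) (ham1 : am ≤ 1) (hδ0 : 0 < δ0)
    (he : δ0 * (2 * (MK + 2 + MK * A + 1)) = ε / 2)
    (hTm : am * (ε / 2 - δ0 * am - MK * (δ0 * am)) ≤ T)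
    (hT : T ≤ Gz + δ0 * am + MK * A * (δ0 * am)) :
    ε / 4 * am ≤ Gz := by
  nlinarith [mul_pos ham hδ0, mul_nonneg (mul_nonneg hMK0 hδ0.le) ham.le,
    mul_nonneg (mul_nonneg hMK0 hA0) (mul_nonneg hδ0.le ham.le),
    mul_le_of_le_one_right (mul_nonneg hδ0.le ham.le) ham1,
    mul_le_of_le_one_right (mul_nonneg (mul_nonneg hMK0 hδ0.le) ham.le) ham1]

section Seg

variable {E : ℕ → Type} [∀ i, NormedAddCommGroup (E i)] [∀ i, NormedSpace ℝ (E i)]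
  {p : ℝ≥0∞} [Fact (1 ≤ p)]

/-- Coordinate projection as a continuous linear map. -/
noncomputable def projCLM (E : ℕ → Type) [∀ i, NormedAddCommGroup (E i)]
    [∀ i, NormedSpace ℝ (E i)] (p : ℝ≥0∞) [Fact (1 ≤ p)] (n : ℕ) : lp E p →L[ℝ] E n :=
  LinearMap.mkContinuous
    { toFun := fun f => f n
      map_add' := fun f g => by beta_reduce; rw [show ((f + g : lp E p) : ∀ i, E i) = ⇑f + ⇑g from lp.coeFn_add f g]; rfl
      map_smul' := fun c f => by beta_reduce; rw [show ((c • f : lp E p) : ∀ i, E i) = c • ⇑f from lp.coeFn_smul c f]; rfl } 1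
    (fun f => by
      have hp0 : p ≠ 0 := (lt_of_lt_of_le zero_lt_one (Fact.out : 1 ≤ p)).ne'
      simpa using lp.norm_apply_le_norm hp0 f n)

@[simp] lemma projCLM_apply (n : ℕ) (f : lp E p) : projCLM E p n f = f n := rfl

/-- Segment projection onto coordinates in `[s, t)`. -/
noncomputable def segCLM (hp : p ≠ ∞) (s t : ℕ) : lp E p →L[ℝ] lp E p :=
  ∑ i ∈ Finset.Ico s t, (lpSingleCLM E p hp i).comp (projCLM E p i)

lemma segCLM_eq_sum (hp : p ≠ ∞) (s t : ℕ) (y : lp E p) :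
    segCLM hp s t y = ∑ i ∈ Finset.Ico s t, lp.single p i (y i) := by
  simp only [segCLM, ContinuousLinearMap.sum_apply]
  rfl

lemma segCLM_coe (hp : p ≠ ∞) (s t : ℕ) (y : lp E p) (j : ℕ) :
    (segCLM hp s t y : ∀ i, E i) j = if j ∈ Finset.Ico s t then y j else 0 := by
  rw [segCLM_eq_sum, lp.coeFn_sum]
  simp only [Finset.sum_apply, lp.single_apply, Finset.sum_dite_eq, Finset.sum_pi_single]

lemma norm_segCLM_rpow (hp : p ≠ ∞) (hp0 : 0 < p.toReal) (s t : ℕ) (y : lp E p) :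
    ‖segCLM hp s t y‖ ^ p.toReal = ∑ i ∈ Finset.Ico s t, ‖y i‖ ^ p.toReal := by
  rw [segCLM_eq_sum]
  exact lp.norm_sum_single hp0 _ _

lemma norm_segCLM_le (hp : p ≠ ∞) (hp0 : 0 < p.toReal) (s t : ℕ) (y : lp E p) :
    ‖segCLM hp s t y‖ ≤ ‖y‖ := by
  rw [← Real.rpow_le_rpow_iff (norm_nonneg _) (norm_nonneg _) hp0, norm_segCLM_rpow hp hp0]
  exact sum_le_hasSum _ (fun i _ => by positivity) (lp.hasSum_norm hp0 y)

lemma segCLM_sub_head (hp : p ≠ ∞) {u s : ℕ} (hu : u ≤ s) (t : ℕ) (y : lp E p) :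
    segCLM hp s t (y - segCLM hp 0 u y) = segCLM hp s t y := by
  apply lp.ext
  funext j
  rw [segCLM_coe, segCLM_coe]
  by_cases hj : j ∈ Finset.Ico s t
  · rw [if_pos hj, if_pos hj, lp.coeFn_sub, Pi.sub_apply, segCLM_coe]
    rw [if_neg, sub_zero]
    intro hj'
    rw [Finset.mem_Ico] at hj hj'
    omega
  · rw [if_neg hj, if_neg hj]

lemma segCLM_split (hp : p ≠ ∞) {s t u : ℕ} (hst : s ≤ t) (htu : t ≤ u) :
    segCLM (E := E) hp s u = segCLM hp s t + segCLM hp t u := by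
  rw [segCLM, segCLM, segCLM]
  exact (Finset.sum_Ico_consecutive _ hst htu).symm

lemma sum_Ico_telescope (h : ℕ → ℝ) (N : ℕ → ℕ) (hN : Monotone N) (s : ℕ) :
    ∀ J : ℕ, ∑ j ∈ Finset.range J, ∑ i ∈ Finset.Ico (N (j + s)) (N (j + s + 1)), h i
      = ∑ i ∈ Finset.Ico (N s) (N (J + s)), h i := by
  intro J
  induction J with
  | zero => simp
  | succ J ih =>
    rw [Finset.sum_range_succ, ih, show J + 1 + s = J + s + 1 by omega]
    exact Finset.sum_Ico_consecutive _ (hN (by omega)) (hN (by omega))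

lemma tendsto_head (hp : p ≠ ∞) (y : lp E p) :
    Tendsto (fun t => segCLM hp 0 t y) atTop (𝓝 y) := by
  have := (lp.hasSum_single hp y).tendsto_sum_nat
  refine this.congr (fun n => ?_)
  rw [segCLM_eq_sum]
  rw [Finset.range_eq_Ico]

lemma lpSingleCLM_apply (hp : p ≠ ∞) (n : ℕ) (a : E n) :
    lpSingleCLM E p hp n a = lp.single p n a := rfl

lemma norm_lp_single' (hp0 : 0 < p.toReal) (n : ℕ) (a : E n) :
    ‖lp.single p n a‖ = ‖a‖ := by
  simpa [Pi.single_eq_same] using lp.norm_single (E := E) (p := p) (lt_of_lt_of_le zero_lt_one (Fact.out : 1 ≤ p)) n a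

end Seg

set_option maxHeartbeats 1000000 in
/-- for `1 < p < ∞`, `X = (Σ ⊕ X_n)_{ℓ_p}` and `1 ≤ q < p*`, a bounded subset
`K` of `X*` is a `q`-Right set iff each `P_n(K)` is a `q`-Right set, where
`P_n : X* → X_n*` is the canonical projection (precomposition with the coordinate
inclusion). -/
theorem stmt16 {p pstar q : ℝ≥0∞} [Fact (1 ≤ p)] (hp1 : 1 < p) (hp2 : p < ∞)
    (hps : 1 / p + 1 / pstar = 1) (hq1 : 1 ≤ q) (hq2 : q < pstar)
    (E : ℕ → Type) [∀ i, NormedAddCommGroup (E i)] [∀ i, NormedSpace ℝ (E i)]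
    [∀ i, CompleteSpace (E i)] (K : Set (StrongDual ℝ (lp E p))) (hK : IsBounded K) :
    IsPRightSet q K ↔
      ∀ n, IsPRightSet q
        ((fun f : StrongDual ℝ (lp E p) => f.comp (lpSingleCLM E p hp2.ne n)) '' K) := by
  have hpne : p ≠ ∞ := hp2.ne
  have hp0 : (0:ℝ≥0∞) < p := lt_trans zero_lt_one hp1
  have hpr1 : 1 < p.toReal := by
    simpa using ENNReal.toReal_strict_mono hpne hp1
  have hpr0 : 0 < p.toReal := lt_trans zero_lt_one hpr1
  have hpstar0 : pstar ≠ 0 := by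
    intro h; rw [h] at hps; simp at hps
  have hpstar_ne : pstar ≠ ∞ := by
    intro h; rw [h] at hps
    simp only [one_div] at hps
    rw [ENNReal.inv_top, add_zero, ENNReal.inv_eq_one] at hps
    exact hp1.ne' hps
  have hq_ne : q ≠ ∞ := (hq2.trans_le le_top).ne
  have hqr1 : 1 ≤ q.toReal := by
    simpa using ENNReal.toReal_mono hq_ne hq1
  have hqr0 : 0 < q.toReal := lt_of_lt_of_le zero_lt_one hqr1
  have hqr_lt : q.toReal < pstar.toReal := ENNReal.toReal_strict_mono hpstar_ne hq2
  have hconj : (p.toReal)⁻¹ + (pstar.toReal)⁻¹ = 1 := by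
    have h1 : p⁻¹ ≠ ∞ := by simp [hp0.ne']
    have h2 : pstar⁻¹ ≠ ∞ := by simp [hpstar0]
    rw [one_div, one_div] at hps
    have := congrArg ENNReal.toReal hps
    rwa [ENNReal.toReal_add h1 h2, ENNReal.toReal_inv, ENNReal.toReal_inv,
      ENNReal.toReal_one] at this
  have hpsr1 : 1 < pstar.toReal := by
    have hinv : (pstar.toReal)⁻¹ < 1 := by
      have : 0 < (p.toReal)⁻¹ := inv_pos.2 hpr0
      linarith
    have hpsr0 : 0 < pstar.toReal := by
      have h1 : (p.toReal)⁻¹ < 1 := by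
        rw [inv_lt_one_iff₀]; right; exact hpr1
      have : 0 < (pstar.toReal)⁻¹ := by linarith
      exact inv_pos.1 this
    nlinarith [mul_inv_cancel₀ (ne_of_gt hpsr0)]
  set pr := p.toReal
  set psr := pstar.toReal
  set qr := q.toReal with hqr_def
  have hconjR : psr.HolderConjugate pr := Real.holderConjugate_iff.2 ⟨hpsr1, by rw [add_comm]; exact hconj⟩
  constructor
  · -- Forward direction
    intro hKr n
    obtain ⟨C, hC⟩ := isBounded_iff_forall_norm_le.1 hK
    have hMK0 : 0 ≤ max C 0 := le_max_right _ _
    have hMK : ∀ f ∈ K, ‖f‖ ≤ max C 0 := fun f hf => le_trans (hC f hf) (le_max_left _ _)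
    constructor
    · refine isBounded_iff_forall_norm_le.2 ⟨max C 0, ?_⟩
      rintro g ⟨f, hf, rfl⟩
      refine ContinuousLinearMap.opNorm_le_bound _ hMK0 (fun a => ?_)
      have : ‖f ((lpSingleCLM E p hp2.ne n) a)‖ ≤ ‖f‖ * ‖(lpSingleCLM E p hp2.ne n) a‖ :=
        f.le_opNorm _
      rw [lpSingleCLM_apply, norm_lp_single' hpr0] at this
      exact le_trans this (mul_le_mul_of_nonneg_right (hMK f hf) (norm_nonneg _))
    · intro x hx
      have hx' : PRightNull q (fun m => (lpSingleCLM E p hp2.ne n) (x m)) :=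
        aux_PRightNull_comp _ hx
      have h2 := hKr.2 _ hx'
      refine Tendsto.congr (fun m => ?_) h2
      exact (aux_iSup_subtype_image (fun f : StrongDual ℝ (lp E p) => f.comp (lpSingleCLM E p hp2.ne n))
        K (fun g => |g (x m)|)).symm
  · -- Backward direction
    intro hAll
    refine ⟨hK, ?_⟩
    intro x hx
    by_contra hcon
    obtain ⟨C, hC⟩ := isBounded_iff_forall_norm_le.1 hK
    set MK := max C 0 with hMK_def
    have hMK0 : 0 ≤ MK := le_max_right _ _
    have hMK : ∀ f ∈ K, ‖f‖ ≤ MK := fun f hf => le_trans (hC f hf) (le_max_left _ _)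
    -- a frequently-large subsequence
    have hnot : ∃ ε > (0:ℝ), ∀ L, ∃ m > L, ε ≤ ⨆ f : K, |f.1 (x m)| := by
      by_contra h
      push_neg at h
      refine hcon (Metric.tendsto_atTop.2 (fun ε hε => ?_))
      obtain ⟨L, hL⟩ := h ε hε
      refine ⟨L + 1, fun m hm => ?_⟩
      rw [Real.dist_eq, sub_zero, abs_of_nonneg (aux_iSup_abs_nonneg _)]
      exact hL m (by omega)
    obtain ⟨ε, hε, hfreq⟩ := hnot
    obtain ⟨φ, hφ, hφε⟩ := extraction_of_frequently_atTop (frequently_atTop'.2 hfreq)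
    set y : ℕ → lp E p := fun m => x (φ m) with hy_def
    have hy : PRightNull q y := aux_PRightNull_subseq hq_ne hqr0 hx hφ
    have hyS : ∀ m, ε ≤ ⨆ f : K, |f.1 (y m)| := fun m => hφε m
    have hKne : Nonempty ↥K := by
      by_contra hne
      haveI : IsEmpty ↥K := not_nonempty_iff.1 hne
      have h0 := hyS 0
      rw [iSup, Set.range_eq_empty _, Real.sSup_empty] at h0
      linarith
    have hbddK : ∀ z : lp E p, BddAbove (Set.range fun f : K => |f.1 z|) := by
      intro z
      refine ⟨MK * ‖z‖, ?_⟩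
      rintro c ⟨f, rfl⟩
      exact le_trans (f.1.le_opNorm z)
        (mul_le_mul_of_nonneg_right (hMK f.1 f.2) (norm_nonneg _))
    have hsel : ∀ m, ∃ f, f ∈ K ∧ ε / 2 < |f (y m)| := by
      intro m
      have h1 : ε / 2 < ⨆ f : K, |f.1 (y m)| := lt_of_lt_of_le (by linarith) (hyS m)
      obtain ⟨f, hf⟩ := exists_lt_of_lt_ciSup h1
      exact ⟨f.1, f.2, hf⟩
    choose fsel hfselK hfselε using hsel
    -- coordinate image sets
    set imK : ∀ i : ℕ, Set (StrongDual ℝ (E i)) :=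
      fun i => (fun f : StrongDual ℝ (lp E p) => f.comp (lpSingleCLM E p hp2.ne i)) '' K with himK_def
    have hcoord : ∀ i, PRightNull q (fun m => (y m) i) := fun i =>
      aux_PRightNull_comp (projCLM E p i) hy
    have hSup0 : ∀ i, Tendsto (fun m => ⨆ g : imK i, |g.1 ((y m) i)|) atTop (𝓝 0) :=
      fun i => (hAll i).2 _ (hcoord i)
    set Ssum : ℕ → ℕ → ℝ := fun t m => ∑ i ∈ Finset.range t, ⨆ g : imK i, |g.1 ((y m) i)|
      with hSsum_def
    have hSsum0 : ∀ t, Tendsto (fun m => Ssum t m) atTop (𝓝 0) := by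
      intro t
      have := tendsto_finset_sum (Finset.range t)
        (fun i (_ : i ∈ Finset.range t) => hSup0 i)
      simpa using this
    have hbddIm : ∀ (i : ℕ) (v : E i), BddAbove (Set.range fun g : imK i => |g.1 v|) := by
      intro i v
      refine ⟨MK * ‖v‖, ?_⟩
      rintro c ⟨⟨g, ⟨f, hf, rfl⟩⟩, rfl⟩
      have h1 : |f ((lpSingleCLM E p hp2.ne i) v)| ≤ ‖f‖ * ‖(lpSingleCLM E p hp2.ne i) v‖ :=
        f.le_opNorm _
      rw [lpSingleCLM_apply, norm_lp_single' hpr0] at h1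
      exact le_trans h1 (mul_le_mul_of_nonneg_right (hMK f hf) (norm_nonneg _))
    have hfseg : ∀ (f : StrongDual ℝ (lp E p)), f ∈ K → ∀ (s t m : ℕ),
        |f (segCLM hpne s t (y m))| ≤
          ∑ i ∈ Finset.Ico s t, ⨆ g : imK i, |g.1 ((y m) i)| := by
      intro f hf s t m
      rw [segCLM_eq_sum, map_sum]
      refine le_trans (Finset.abs_sum_le_sum_abs _ _) (Finset.sum_le_sum ?_)
      intro i _
      have hmem : (f.comp (lpSingleCLM E p hp2.ne i)) ∈ imK i := ⟨f, hf, rfl⟩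
      exact le_ciSup (hbddIm i _) (⟨_, hmem⟩ : imK i)
    have hfhead : ∀ (f : StrongDual ℝ (lp E p)), f ∈ K → ∀ (t m : ℕ),
        |f (segCLM hpne 0 t (y m))| ≤ Ssum t m := by
      intro f hf t m
      rw [hSsum_def]; beta_reduce; rw [Finset.range_eq_Ico]
      exact hfseg f hf 0 t m
    -- weights
    set r : ℝ := (qr + psr) / 2 with hr_def
    have hr_pos : 0 < r := by
      rw [hr_def]; positivity
    have hqr_r : qr < r := by rw [hr_def]; linarith
    have hr_psr : r < psr := by rw [hr_def]; linarith
    set a : ℕ → ℝ := fun j => ((j : ℝ) + 1) ^ (-(1 / r)) with ha_def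
    have ha_pos : ∀ j, 0 < a j := fun j => Real.rpow_pos_of_pos (by positivity) _
    have ha_le1 : ∀ j, a j ≤ 1 := fun j =>
      Real.rpow_le_one_of_one_le_of_nonpos (by push_cast; linarith)
        (by rw [neg_nonpos]; positivity)
    have hapow : ∀ s : ℝ, ∀ j, a j ^ s = ((j : ℝ) + 1) ^ (-(s / r)) := by
      intro s j
      rw [ha_def, ← Real.rpow_mul (by positivity)]
      congr 1
      ring
    have hshift : ∀ c : ℝ, Summable (fun j : ℕ => ((j : ℝ) + 1) ^ c) ↔
        Summable (fun n : ℕ => (n : ℝ) ^ c) := by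
      intro c
      constructor
      · intro h
        refine (summable_nat_add_iff 1).1 (h.congr (fun n => ?_))
        push_cast
        ring_nf
      · intro h
        refine ((summable_nat_add_iff 1).2 h).congr (fun n => ?_)
        push_cast
        ring_nf
    have hsum_psr : Summable (fun j => a j ^ psr) := by
      have h1 : Summable (fun n : ℕ => (n : ℝ) ^ (-(psr / r))) :=
        Real.summable_nat_rpow.2 (by
          have : 1 < psr / r := (one_lt_div hr_pos).2 hr_psr
          linarith)
      exact ((hshift _).2 h1).congr (fun j => (hapow psr j).symm)
    have hnotsum_qr : ¬ Summable (fun j => a j ^ qr) := by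
      intro hs
      have h1 : Summable (fun j : ℕ => ((j : ℝ) + 1) ^ (-(qr / r))) :=
        hs.congr (fun j => hapow qr j)
      have h2 := Real.summable_nat_rpow.1 ((hshift _).1 h1)
      have : qr / r < 1 := (div_lt_one hr_pos).2 hqr_r
      linarith
    set A := (∑' j, a j ^ psr) ^ (1 / psr) with hA_def
    have hA0 : 0 ≤ A := Real.rpow_nonneg (tsum_nonneg (fun j => by positivity)) _
    -- the gliding-hump recursion
    set δ0 : ℝ := ε / 2 / (2 * (MK + 2 + MK * A + 1)) with hδ0_def
    have hden : 0 < 2 * (MK + 2 + MK * A + 1) := by nlinarith [mul_nonneg hMK0 hA0]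
    have hδ0pos : 0 < δ0 := div_pos (by linarith) hden
    have hδ0eq : δ0 * (2 * (MK + 2 + MK * A + 1)) = ε / 2 := by
      rw [hδ0_def]
      exact div_mul_cancel₀ _ hden.ne'
    have hδpos : ∀ j, 0 < δ0 * a j := fun j => mul_pos hδ0pos (ha_pos j)
    have key : ∀ (j : ℕ) (MN : ℕ × ℕ), ∃ MN' : ℕ × ℕ, MN.1 < MN'.1 ∧ MN.2 < MN'.2 ∧
        Ssum MN.2 MN'.1 < δ0 * a j ∧
        ‖y MN'.1 - segCLM hpne 0 MN'.2 (y MN'.1)‖ < δ0 * a j := by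
      intro j MN
      have h1 : ∀ᶠ m in atTop, Ssum MN.2 m < δ0 * a j :=
        (hSsum0 MN.2).eventually (gt_mem_nhds (hδpos j))
      obtain ⟨m, hm1, hm2⟩ := ((eventually_gt_atTop MN.1).and h1).exists
      have h2 : Tendsto (fun t => ‖y m - segCLM hpne 0 t (y m)‖) atTop (𝓝 0) := by
        have h3 := tendsto_head hpne (y m)
        have h4 : Tendsto (fun t => y m - segCLM hpne 0 t (y m)) atTop (𝓝 (y m - y m)) :=
          tendsto_const_nhds.sub h3
        rw [sub_self] at h4
        simpa using h4.norm
      have h5 : ∀ᶠ t in atTop, ‖y m - segCLM hpne 0 t (y m)‖ < δ0 * a j :=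
        h2.eventually (gt_mem_nhds (hδpos j))
      obtain ⟨t, ht1, ht2⟩ := ((eventually_gt_atTop MN.2).and h5).exists
      exact ⟨(m, t), hm1, ht1, hm2, ht2⟩
    obtain ⟨MN, hMN⟩ : ∃ MN : ℕ → ℕ × ℕ, ∀ j,
        (MN j).1 < (MN (j+1)).1 ∧ (MN j).2 < (MN (j+1)).2 ∧
        Ssum (MN j).2 (MN (j+1)).1 < δ0 * a j ∧
        ‖y (MN (j+1)).1 - segCLM hpne 0 (MN (j+1)).2 (y (MN (j+1)).1)‖ < δ0 * a j := by
      refine ⟨fun j => Nat.rec ((0, 0) : ℕ × ℕ) (fun j ih => (key j ih).choose) j, fun j => ?_⟩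
      exact (key j _).choose_spec
    set M : ℕ → ℕ := fun j => (MN j).1 with hM_def
    set N : ℕ → ℕ := fun j => (MN j).2 with hN_def
    have hNmono : Monotone N := monotone_nat_of_le_succ (fun j => (hMN j).2.1.le)
    set z : ℕ → lp E p := fun m => y (M (m+1)) with hz_def
    set tl : ℕ → lp E p := fun m => z m - segCLM hpne 0 (N (m+1)) (z m) with htl_def
    have htl : ∀ m, ‖tl m‖ < δ0 * a m := fun m => (hMN m).2.2.2
    have hhead : ∀ m, Ssum (N m) (M (m+1)) < δ0 * a m := fun m => (hMN m).2.2.1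
    set fj : ℕ → StrongDual ℝ (lp E p) := fun j => fsel (M (j+1)) with hfj_def
    have hfjK : ∀ j, fj j ∈ K := fun j => hfselK _
    have hfjn : ∀ j, ‖fj j‖ ≤ MK := fun j => hMK _ (hfjK j)
    have hfjε : ∀ j, ε / 2 < |fj j (z j)| := fun j => hfselε _
    -- block summability
    have hsegsum : ∀ (w : lp E p) (s : ℕ),
        Summable (fun j => ‖segCLM (E := E) hpne (N (j + s)) (N (j + s + 1)) w‖ ^ pr) ∧
        ∑' j, ‖segCLM (E := E) hpne (N (j + s)) (N (j + s + 1)) w‖ ^ pr ≤ ‖w‖ ^ pr := by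
      intro w s
      have hb : ∀ J, ∑ j ∈ Finset.range J,
          ‖segCLM (E := E) hpne (N (j + s)) (N (j + s + 1)) w‖ ^ pr ≤ ‖w‖ ^ pr := by
        intro J
        have he : ∀ j ∈ Finset.range J,
            ‖segCLM (E := E) hpne (N (j + s)) (N (j + s + 1)) w‖ ^ pr
            = ∑ i ∈ Finset.Ico (N (j + s)) (N (j + s + 1)), ‖w i‖ ^ pr := fun j _ =>
          norm_segCLM_rpow hpne hpr0 _ _ w
        rw [Finset.sum_congr rfl he,
          sum_Ico_telescope (fun i => ‖w i‖ ^ pr) N hNmono s J]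
        exact sum_le_hasSum _ (fun i _ => by positivity) (lp.hasSum_norm hpr0 w)
      exact ⟨summable_of_sum_range_le (fun j => by positivity) hb,
        Summable.tsum_le_of_sum_range_le (summable_of_sum_range_le (fun j => by positivity) hb) hb⟩
    have hshiftA : ∀ s : ℕ, (∑' j, a (j + s) ^ psr) ^ (1 / psr) ≤ A := by
      intro s
      have h2 : ∑' j, a (j + s) ^ psr ≤ ∑' j, a j ^ psr := by
        have h3 := Summable.sum_add_tsum_nat_add s hsum_psr
        have h4 : 0 ≤ ∑ i ∈ Finset.range s, a i ^ psr :=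
          Finset.sum_nonneg (fun i _ => by positivity)
        linarith
      exact Real.rpow_le_rpow (tsum_nonneg fun j => by positivity) h2 (by positivity)
    have hHolder : ∀ (w : lp E p) (s : ℕ),
        Summable (fun j => a (j + s) * ‖segCLM (E := E) hpne (N (j + s)) (N (j + s + 1)) w‖) ∧
        ∑' j, a (j + s) * ‖segCLM (E := E) hpne (N (j + s)) (N (j + s + 1)) w‖ ≤ A * ‖w‖ := by
      intro w s
      obtain ⟨hs1, hs2⟩ := hsegsum w s
      have h1 : Summable (fun j => a (j + s) ^ psr) := (summable_nat_add_iff s).2 hsum_psr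
      obtain ⟨hS, hle⟩ := Real.summable_and_inner_le_Lp_mul_Lq_tsum_of_nonneg
        (f := fun j => a (j + s))
        (g := fun j => ‖segCLM (E := E) hpne (N (j + s)) (N (j + s + 1)) w‖) hconjR
        (fun j => (ha_pos _).le) (fun j => norm_nonneg _) h1 hs1
      refine ⟨hS, le_trans hle ?_⟩
      have h2 : (∑' j, ‖segCLM (E := E) hpne (N (j + s)) (N (j + s + 1)) w‖ ^ pr) ^ (1 / pr)
          ≤ ‖w‖ := by
        have h5 := Real.rpow_le_rpow (tsum_nonneg fun j => by positivity) hs2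
          (by positivity : (0:ℝ) ≤ 1 / pr)
        rw [one_div, Real.rpow_rpow_inv (norm_nonneg w) hpr0.ne'] at h5
        rw [one_div]
        exact h5
      exact mul_le_mul (hshiftA s) h2
        (Real.rpow_nonneg (tsum_nonneg fun j => by positivity) _) hA0
    -- the functional g
    have hterm_bound : ∀ (w : lp E p) (j : ℕ),
        |a j * fj j (segCLM hpne (N j) (N (j + 1)) w)| ≤
          MK * (a j * ‖segCLM (E := E) hpne (N j) (N (j + 1)) w‖) := by
      intro w j
      rw [abs_mul, abs_of_pos (ha_pos j)]
      calc a j * |fj j (segCLM hpne (N j) (N (j + 1)) w)|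
          ≤ a j * (MK * ‖segCLM (E := E) hpne (N j) (N (j + 1)) w‖) := by
            refine mul_le_mul_of_nonneg_left ?_ (ha_pos j).le
            exact le_trans ((fj j).le_opNorm _)
              (mul_le_mul_of_nonneg_right (hfjn j) (norm_nonneg _))
        _ = MK * (a j * ‖segCLM (E := E) hpne (N j) (N (j + 1)) w‖) := by ring
    have hgsummable : ∀ w : lp E p,
        Summable (fun j => a j * fj j (segCLM hpne (N j) (N (j + 1)) w)) := by
      intro w
      refine Summable.of_norm_bounded (((hHolder w 0).1).mul_left MK) ?_
      intro j
      rw [Real.norm_eq_abs]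
      exact hterm_bound w j
    have habs_summable : ∀ w : lp E p,
        Summable (fun j => |a j * fj j (segCLM hpne (N j) (N (j + 1)) w)|) := fun w =>
      Summable.of_nonneg_of_le (fun j => abs_nonneg _) (hterm_bound w)
        (((hHolder w 0).1).mul_left MK)
    have hgbound : ∀ w : lp E p,
        |∑' j, a j * fj j (segCLM hpne (N j) (N (j + 1)) w)| ≤ MK * A * ‖w‖ := by
      intro w
      calc |∑' j, a j * fj j (segCLM hpne (N j) (N (j + 1)) w)|
          ≤ ∑' j, |a j * fj j (segCLM hpne (N j) (N (j + 1)) w)| := by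
            have hns : Summable (fun j => ‖a j * fj j (segCLM hpne (N j) (N (j + 1)) w)‖) := by
              simpa only [Real.norm_eq_abs] using habs_summable w
            simpa only [Real.norm_eq_abs] using norm_tsum_le_tsum_norm hns
        _ ≤ ∑' j, MK * (a j * ‖segCLM (E := E) hpne (N j) (N (j + 1)) w‖) :=
            Summable.tsum_le_tsum (hterm_bound w) (habs_summable w) (((hHolder w 0).1).mul_left MK)
        _ = MK * ∑' j, a j * ‖segCLM (E := E) hpne (N j) (N (j + 1)) w‖ := tsum_mul_left
        _ ≤ MK * (A * ‖w‖) := mul_le_mul_of_nonneg_left (hHolder w 0).2 hMK0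
        _ = MK * A * ‖w‖ := by ring
    set g : StrongDual ℝ (lp E p) := LinearMap.mkContinuous
      { toFun := fun w => ∑' j, a j * fj j (segCLM hpne (N j) (N (j + 1)) w)
        map_add' := by
          intro w v
          beta_reduce
          rw [← Summable.tsum_add (hgsummable w) (hgsummable v)]
          refine tsum_congr (fun j => ?_)
          rw [map_add, map_add, mul_add]
        map_smul' := by
          intro c w
          simp only [RingHom.id_apply, smul_eq_mul]
          rw [← tsum_mul_left]
          refine tsum_congr (fun j => ?_)
          rw [map_smul, map_smul]
          simp only [smul_eq_mul]
          ring }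
      (MK * A) (fun w => by simpa [Real.norm_eq_abs] using hgbound w) with hg_def
    have hg_apply : ∀ w : lp E p,
        g w = ∑' j, a j * fj j (segCLM hpne (N j) (N (j + 1)) w) := fun w => rfl
    -- main-term estimate
    have hsplit : ∀ m, segCLM (E := E) hpne (N m) (N (m+1)) (z m)
        = z m - tl m - segCLM hpne 0 (N m) (z m) := by
      intro m
      have h1 : segCLM (E := E) hpne 0 (N (m+1))
          = segCLM hpne 0 (N m) + segCLM hpne (N m) (N (m+1)) :=
        segCLM_split hpne (Nat.zero_le _) (hMN m).2.1.le
      have h2 : segCLM (E := E) hpne 0 (N (m+1)) (z m) = z m - tl m :=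
        (sub_sub_cancel _ _).symm
      have h3 := congrArg (fun (T : lp E p →L[ℝ] lp E p) => T (z m)) h1
      simp only [ContinuousLinearMap.add_apply] at h3
      rw [h2] at h3
      exact eq_sub_of_add_eq' h3.symm
    have hmain : ∀ m, ε / 2 - δ0 * a m - MK * (δ0 * a m)
        ≤ |fj m (segCLM hpne (N m) (N (m+1)) (z m))| := by
      intro m
      have h1 : fj m (segCLM hpne (N m) (N (m+1)) (z m))
          = fj m (z m) - fj m (tl m) - fj m (segCLM hpne 0 (N m) (z m)) := by
        rw [hsplit m, map_sub, map_sub]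
      have h2 : |fj m (tl m)| ≤ MK * (δ0 * a m) :=
        le_trans ((fj m).le_opNorm _)
          (mul_le_mul (hfjn m) (htl m).le (norm_nonneg _) hMK0)
      have h3 : |fj m (segCLM hpne 0 (N m) (z m))| ≤ δ0 * a m :=
        le_trans (hfhead (fj m) (hfjK m) (N m) (M (m+1))) (hhead m).le
      have h4 := hfjε m
      have h5 : fj m (z m) = fj m (segCLM hpne (N m) (N (m+1)) (z m))
          + fj m (tl m) + fj m (segCLM hpne 0 (N m) (z m)) := by linarith [h1]
      have h6 : |fj m (z m)| ≤ |fj m (segCLM hpne (N m) (N (m+1)) (z m))|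
          + |fj m (tl m)| + |fj m (segCLM hpne 0 (N m) (z m))| := by
        rw [h5]
        have e1 := abs_add_le (fj m (segCLM hpne (N m) (N (m+1)) (z m)) + fj m (tl m))
          (fj m (segCLM hpne 0 (N m) (z m)))
        have e2 := abs_add_le (fj m (segCLM hpne (N m) (N (m+1)) (z m))) (fj m (tl m))
        linarith
      linarith
    -- cross terms with small index
    have hcross1 : ∀ m, ∑ j ∈ Finset.range m,
        |a j * fj j (segCLM hpne (N j) (N (j+1)) (z m))| ≤ δ0 * a m := by
      intro m
      have h1 : ∀ j ∈ Finset.range m, |a j * fj j (segCLM hpne (N j) (N (j+1)) (z m))|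
          ≤ ∑ i ∈ Finset.Ico (N j) (N (j+1)), ⨆ gg : imK i, |gg.1 ((y (M (m+1))) i)| := by
        intro j _
        rw [abs_mul, abs_of_pos (ha_pos j)]
        calc a j * |fj j (segCLM hpne (N j) (N (j+1)) (z m))|
            ≤ 1 * |fj j (segCLM hpne (N j) (N (j+1)) (z m))| :=
              mul_le_mul_of_nonneg_right (ha_le1 j) (abs_nonneg _)
          _ = |fj j (segCLM hpne (N j) (N (j+1)) (z m))| := one_mul _
          _ ≤ _ := hfseg (fj j) (hfjK j) (N j) (N (j+1)) (M (m+1))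
      refine le_trans (Finset.sum_le_sum h1) ?_
      have h2 := sum_Ico_telescope
        (fun i => ⨆ gg : imK i, |gg.1 ((y (M (m+1))) i)|) N hNmono 0 m
      refine le_trans (le_of_eq h2) ?_
      refine le_trans ?_ (hhead m).le
      refine le_trans (Finset.sum_le_sum_of_subset_of_nonneg ?_
        (fun i _ _ => aux_iSup_abs_nonneg _)) (le_of_eq rfl)
      intro i hi
      rw [Finset.mem_range]
      rw [Finset.mem_Ico] at hi
      exact hi.2
    -- cross terms with large index
    have hcross2 : ∀ m, |∑' j, a (j + (m+1)) * fj (j + (m+1))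
        (segCLM hpne (N (j + (m+1))) (N (j + (m+1) + 1)) (z m))| ≤ MK * A * (δ0 * a m) := by
      intro m
      have hseg_eq : ∀ j, segCLM (E := E) hpne (N (j + (m+1))) (N (j + (m+1) + 1)) (z m)
          = segCLM hpne (N (j + (m+1))) (N (j + (m+1) + 1)) (tl m) := by
        intro j
        rw [htl_def]
        exact (segCLM_sub_head hpne (hNmono (by omega)) _ _).symm
      have hb : ∀ j, |a (j + (m+1)) * fj (j + (m+1))
            (segCLM hpne (N (j + (m+1))) (N (j + (m+1) + 1)) (z m))|
          ≤ MK * (a (j + (m+1)) * ‖segCLM (E := E) hpne (N (j + (m+1)))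
            (N (j + (m+1) + 1)) (tl m)‖) := by
        intro j
        rw [hseg_eq j, abs_mul, abs_of_pos (ha_pos _)]
        calc a (j + (m+1)) * |fj (j + (m+1))
              (segCLM hpne (N (j + (m+1))) (N (j + (m+1) + 1)) (tl m))|
            ≤ a (j + (m+1)) * (MK * ‖segCLM (E := E) hpne (N (j + (m+1)))
              (N (j + (m+1) + 1)) (tl m)‖) := by
              refine mul_le_mul_of_nonneg_left ?_ (ha_pos (j + (m+1))).le
              exact le_trans ((fj (j + (m+1))).le_opNorm
                  (segCLM hpne (N (j + (m+1))) (N (j + (m+1) + 1)) (tl m)))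
                (mul_le_mul_of_nonneg_right (hfjn (j + (m+1))) (norm_nonneg _))
          _ = MK * (a (j + (m+1)) * ‖segCLM (E := E) hpne (N (j + (m+1)))
              (N (j + (m+1) + 1)) (tl m)‖) := by ring
      have hS := ((hHolder (tl m) (m+1)).1).mul_left MK
      have habs : Summable (fun j => |a (j + (m+1)) * fj (j + (m+1))
          (segCLM hpne (N (j + (m+1))) (N (j + (m+1) + 1)) (z m))|) :=
        Summable.of_nonneg_of_le (fun _ => abs_nonneg _) hb hS
      calc |∑' j, a (j + (m+1)) * fj (j + (m+1))
            (segCLM hpne (N (j + (m+1))) (N (j + (m+1) + 1)) (z m))|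
          ≤ ∑' j, |a (j + (m+1)) * fj (j + (m+1))
            (segCLM hpne (N (j + (m+1))) (N (j + (m+1) + 1)) (z m))| := by
            have hns : Summable (fun j => ‖a (j + (m+1)) * fj (j + (m+1))
                (segCLM hpne (N (j + (m+1))) (N (j + (m+1) + 1)) (z m))‖) := by
              simpa only [Real.norm_eq_abs] using habs
            simpa only [Real.norm_eq_abs] using norm_tsum_le_tsum_norm hns
        _ ≤ ∑' j, MK * (a (j + (m+1)) * ‖segCLM (E := E) hpne (N (j + (m+1)))
            (N (j + (m+1) + 1)) (tl m)‖) := Summable.tsum_le_tsum hb habs hS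
        _ = MK * ∑' j, a (j + (m+1)) * ‖segCLM (E := E) hpne (N (j + (m+1)))
            (N (j + (m+1) + 1)) (tl m)‖ := tsum_mul_left
        _ ≤ MK * (A * ‖tl m‖) := mul_le_mul_of_nonneg_left (hHolder (tl m) (m+1)).2 hMK0
        _ ≤ MK * (A * (δ0 * a m)) := by
            refine mul_le_mul_of_nonneg_left (mul_le_mul_of_nonneg_left (htl m).le hA0) hMK0
        _ = MK * A * (δ0 * a m) := by ring
    -- lower bound for |g (z m)|
    have hglow : ∀ m, ε / 4 * a m ≤ |g (z m)| := by
      intro m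
      have h0 := Summable.sum_add_tsum_nat_add (f := fun j => a j * fj j
        (segCLM hpne (N j) (N (j+1)) (z m))) (m+1) (hgsummable (z m))
      rw [Finset.sum_range_succ] at h0
      have hgz : g (z m) = ∑ j ∈ Finset.range m, a j * fj j (segCLM hpne (N j) (N (j+1)) (z m))
          + a m * fj m (segCLM hpne (N m) (N (m+1)) (z m))
          + ∑' j, a (j + (m+1)) * fj (j + (m+1))
            (segCLM hpne (N (j + (m+1))) (N (j + (m+1) + 1)) (z m)) := by
        rw [hg_apply]
        linarith [h0]
      have hTm : a m * (ε / 2 - δ0 * a m - MK * (δ0 * a m))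
          ≤ |a m * fj m (segCLM hpne (N m) (N (m+1)) (z m))| := by
        rw [abs_mul, abs_of_pos (ha_pos m)]
        exact mul_le_mul_of_nonneg_left (hmain m) (ha_pos m).le
      have hc1 : |∑ j ∈ Finset.range m, a j * fj j (segCLM hpne (N j) (N (j+1)) (z m))|
          ≤ δ0 * a m := le_trans (Finset.abs_sum_le_sum_abs _ _) (hcross1 m)
      have hc2 := hcross2 m
      have hT : |a m * fj m (segCLM hpne (N m) (N (m+1)) (z m))|
          ≤ |g (z m)| + (δ0 * a m) + (MK * A * (δ0 * a m)) := by
        have hEq : a m * fj m (segCLM hpne (N m) (N (m+1)) (z m))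
            = g (z m) - (∑ j ∈ Finset.range m, a j * fj j (segCLM hpne (N j) (N (j+1)) (z m)))
              - (∑' j, a (j + (m+1)) * fj (j + (m+1))
                (segCLM hpne (N (j + (m+1))) (N (j + (m+1) + 1)) (z m))) := by
          linarith [hgz]
        rw [hEq]
        refine le_trans (abs_sub _ _) ?_
        have := abs_sub (g (z m)) (∑ j ∈ Finset.range m, a j * fj j
          (segCLM hpne (N j) (N (j+1)) (z m)))
        linarith
      exact aux_arith hMK0 hA0 (ha_pos m) (ha_le1 m) hδ0pos hδ0eq hTm hT
    -- final contradiction via weak q-summability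
    have hwq := hy.1
    rw [WeaklyPSummable, if_neg hq_ne] at hwq
    have hsumg : Summable (fun n => |g (y n)| ^ qr) := by
      have := (memℓp_gen_iff hqr0).1 (hwq g)
      simpa [Real.norm_eq_abs] using this
    have hMstrict : StrictMono (fun m => M (m+1)) :=
      strictMono_nat_of_lt_succ (fun m => (hMN (m+1)).1)
    have hsub : Summable (fun m => |g (z m)| ^ qr) :=
      hsumg.comp_injective hMstrict.injective
    have hlow : ∀ m, (ε / 4 * a m) ^ qr ≤ |g (z m)| ^ qr := fun m =>
      Real.rpow_le_rpow (by positivity) (hglow m) hqr0.le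
    have hsum2 : Summable (fun m => (ε / 4 * a m) ^ qr) :=
      Summable.of_nonneg_of_le (fun m => by positivity) hlow hsub
    have hsum3 : Summable (fun m => (ε / 4) ^ qr * a m ^ qr) := by
      refine hsum2.congr (fun m => ?_)
      rw [Real.mul_rpow (by positivity) (ha_pos m).le]
    have hfin : Summable (fun m => a m ^ qr) :=
      (summable_mul_left_iff (by positivity : (ε / 4 : ℝ) ^ qr ≠ 0)).1 hsum3
    exact hnotsum_qr hfin
end

section
/- If X* has the p-Dunford-Pettis relatively compact property and Y has the p-sequentially Right* property, then every bounded linear operator from X to Y is weakly compact. -/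
open Filter Topology NormedSpace Bornology
open scoped ENNReal ContinuousMap ZeroAtInfty

lemma weaklyNull_comp {X Y : Type*} [NormedAddCommGroup X] [NormedSpace ℝ X]
    [NormedAddCommGroup Y] [NormedSpace ℝ Y] (S : X →L[ℝ] Y) {x : ℕ → X}
    (hx : WeaklyNull x) : WeaklyNull (fun n => S (x n)) := fun f => hx (f.comp S)

lemma weaklyPSummable_comp {X Y : Type*} [NormedAddCommGroup X] [NormedSpace ℝ X]
    [NormedAddCommGroup Y] [NormedSpace ℝ Y] {p : ℝ≥0∞} (S : X →L[ℝ] Y) {x : ℕ → X}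
    (hx : WeaklyPSummable p x) : WeaklyPSummable p (fun n => S (x n)) := by
  unfold WeaklyPSummable at hx ⊢
  split_ifs at hx ⊢ with h
  · exact weaklyNull_comp S hx
  · exact fun f => hx (f.comp S)

lemma isDP_image {X Y : Type*} [NormedAddCommGroup X] [NormedSpace ℝ X]
    [NormedAddCommGroup Y] [NormedSpace ℝ Y] (S : X →L[ℝ] Y) {A : Set X}
    (hA : IsDunfordPettisSet A) : IsDunfordPettisSet (S '' A) := by
  obtain ⟨hb, h⟩ := hA
  refine ⟨S.lipschitz.isBounded_image hb, ?_⟩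
  intro f hf
  have hg : WeaklyNull (fun n => (f n).comp S) := by
    intro F
    exact hf (F.comp (adjointOp S))
  have := h (fun n => (f n).comp S) hg
  have key : ∀ n, (⨆ b : (S '' A), |f n b.1|) = ⨆ a : A, |((f n).comp S) a.1| := by
    intro n
    rw [iSup, iSup]
    congr 1
    ext r
    constructor
    · rintro ⟨⟨b, a, ha, rfl⟩, rfl⟩
      exact ⟨⟨a, ha⟩, rfl⟩
    · rintro ⟨⟨a, ha⟩, rfl⟩
      exact ⟨⟨S a, a, ha, rfl⟩, rfl⟩
  simpa only [key] using this

/-- if `X*` has the `p`-Dunford-Pettis relatively compact property and `Y`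
has the `p`-sequentially Right* property, then every operator `X → Y` is weakly compact. -/
theorem stmt17 {p : ℝ≥0∞} (hp : 1 ≤ p) {X Y : Type*} [NormedAddCommGroup X] [NormedSpace ℝ X]
    [CompleteSpace X] [NormedAddCommGroup Y] [NormedSpace ℝ Y] [CompleteSpace Y]
    (hXdual : ∀ f : ℕ → StrongDual ℝ X, PRightNull p f → Tendsto (fun n => ‖f n‖) atTop (𝓝 0))
    (hY : PSRStar p Y) (T : X →L[ℝ] Y) :
    RelWeaklyCompact (T '' Metric.closedBall 0 1) := by
  apply hY
  have hKsub : T '' Metric.closedBall 0 1 ⊆ Metric.closedBall 0 ‖T‖ := by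
    rintro - ⟨x, hx, rfl⟩
    simp only [Metric.mem_closedBall, dist_zero_right] at hx ⊢
    calc ‖T x‖ ≤ ‖T‖ * ‖x‖ := T.le_opNorm x
    _ ≤ ‖T‖ * 1 := by
        exact mul_le_mul_of_nonneg_left hx (norm_nonneg T)
    _ = ‖T‖ := mul_one _
  refine ⟨Metric.isBounded_closedBall.subset hKsub, ?_⟩
  intro f hf
  -- the adjoint sequence is p-Right null in X*
  have hadj : PRightNull p (fun n => adjointOp T (f n)) := by
    obtain ⟨hws, hdp⟩ := hf
    refine ⟨weaklyPSummable_comp (adjointOp T) hws, ?_⟩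
    have := isDP_image (adjointOp T) hdp
    rwa [← Set.range_comp] at this
  have hnorm := hXdual _ hadj
  have hne : Nonempty (T '' Metric.closedBall 0 1 : Set Y) :=
    ⟨⟨T 0, 0, by simp, rfl⟩⟩
  have hbdd : ∀ n, BddAbove (Set.range (fun a : (T '' Metric.closedBall 0 1 : Set Y) =>
      |f n a.1|)) := by
    intro n
    refine ⟨‖f n‖ * ‖T‖, ?_⟩
    rintro - ⟨⟨a, ha⟩, rfl⟩
    have : ‖a‖ ≤ ‖T‖ := by
      have := hKsub ha
      simpa only [Metric.mem_closedBall, dist_zero_right] using this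
    calc |f n a| = ‖f n a‖ := rfl
    _ ≤ ‖f n‖ * ‖a‖ := (f n).le_opNorm a
    _ ≤ ‖f n‖ * ‖T‖ := mul_le_mul_of_nonneg_left this (norm_nonneg _)
  have hle : ∀ n, (⨆ a : (T '' Metric.closedBall 0 1 : Set Y), |f n a.1|) ≤
      ‖adjointOp T (f n)‖ := by
    intro n
    refine ciSup_le ?_
    rintro ⟨-, x, hx, rfl⟩
    have hx1 : ‖x‖ ≤ 1 := by
      simpa only [Metric.mem_closedBall, dist_zero_right] using hx
    calc |f n (T x)| = ‖(adjointOp T (f n)) x‖ := rfl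
    _ ≤ ‖adjointOp T (f n)‖ * ‖x‖ := (adjointOp T (f n)).le_opNorm x
    _ ≤ ‖adjointOp T (f n)‖ * 1 := by
        exact mul_le_mul_of_nonneg_left hx1 (norm_nonneg _)
    _ = ‖adjointOp T (f n)‖ := mul_one _
  have hge : ∀ n, 0 ≤ (⨆ a : (T '' Metric.closedBall 0 1 : Set Y), |f n a.1|) := by
    intro n
    obtain ⟨a⟩ := hne
    exact le_trans (abs_nonneg (f n a.1)) (le_ciSup (hbdd n) a)
  exact squeeze_zero hge hle hnorm
end
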